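/- Let γ > 0 and let u : [0,T)×ℝ → ℝ be a C¹ solution of the traffic flow model ∂_t u + ∂_x (u(1−u) e^{−ū}) = 0, where ū(t,x) = (1/γ)∫_x^{x+γ} u(t,y) dy, with ∂_x u C¹, 0 ≤ u(t,x) ≤ 1 for all (t,x), and such that for each t ∈ [0,T) the infimum N(t) := inf_{x∈ℝ} ∂_x u(t,x) is attained at some point η(t) and t ↦ N(t) is locally Lipschitz. Then N(t) ≥ min{ N(0), −1/γ } for all t ∈ [0,T). -/

import Mathlib

/-!
Write `w = ∂ₓu` and `N(t) = w(t, η(t))`. Differentiating the equation in `x` and using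
`∂ₓw(t, η(t)) = 0` gives
`∂ₜw(t, η(t)) = e^{-ū} (2N² + 2N(1-2u)A - u(1-u)A² + u(1-u)B)`
with `A = (u(η+γ) - u(η))/γ` and `B = (w(η+γ) - w(η))/γ ≥ 0`. As `0 ≤ u ≤ 1` we have
`|A| ≤ 1/γ`, and the quadratic is nonnegative once `N ≤ -1/γ`. Since `N(τ) ≤ w(τ, η(t))` for all
`τ`, the function `τ ↦ w(τ, η(t))` is an upper barrier for `N` touching it at `t`, so `N` cannot
decrease while it stays below `-1/γ`.
-/

open Set

/-- The nonlocal average `ū(t,x) = (1/γ)∫_x^{x+γ} u(t,y) dy`. -/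
noncomputable def ubar (γ : ℝ) (u : ℝ → ℝ → ℝ) (t x : ℝ) : ℝ :=
  (1/γ) * ∫ y in x..(x + γ), u t y

open Filter Topology MeasureTheory

namespace ContDiffOn

variable {f : ℝ → ℝ → ℝ} {s : Set ℝ} {t : ℝ}

theorem differentiable_apply (hf : ContDiffOn ℝ 1 (Function.uncurry f) (s ×ˢ univ))
    (ht : t ∈ s) : Differentiable ℝ (f t) := fun x => by
  have hmaps : MapsTo (fun y : ℝ => (t, y)) univ (s ×ˢ univ) := fun y _ => ⟨ht, mem_univ y⟩
  have h := (hf.differentiableOn one_ne_zero (t, x) ⟨ht, mem_univ x⟩).comp x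
    ((differentiableAt_const t).prodMk differentiableAt_id).differentiableWithinAt hmaps
  exact differentiableWithinAt_univ.1 h

theorem hasDerivAt_flip_apply (hf : ContDiffOn ℝ 1 (Function.uncurry f) (s ×ˢ univ))
    (ht : t ∈ interior s) (x : ℝ) :
    HasDerivAt (fun τ => f τ x) (fderiv ℝ (Function.uncurry f) (t, x) (1, 0)) t := by
  have hmem : s ×ˢ univ ∈ 𝓝 (t, x) := by
    rw [← mem_interior_iff_mem_nhds, interior_prod_eq, interior_univ]
    exact ⟨ht, mem_univ x⟩
  exact ((hf.differentiableOn one_ne_zero).differentiableAt hmem).hasFDerivAt.comp_hasDerivAt t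
    ((hasDerivAt_id t).prodMk (hasDerivAt_const t x))

theorem differentiableAt_flip_apply (hf : ContDiffOn ℝ 1 (Function.uncurry f) (s ×ˢ univ))
    (ht : t ∈ interior s) (x : ℝ) : DifferentiableAt ℝ (fun τ => f τ x) t :=
  (hf.hasDerivAt_flip_apply ht x).differentiableAt

theorem continuousOn_deriv_flip_apply (hf : ContDiffOn ℝ 1 (Function.uncurry f) (s ×ˢ univ)) :
    ContinuousOn (fun p : ℝ × ℝ => deriv (fun τ => f τ p.2) p.1) (interior s ×ˢ univ) := by
  have hopen : IsOpen (interior s ×ˢ (univ : Set ℝ)) := isOpen_interior.prod isOpen_univ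
  have hfderiv := (hf.mono (prod_mono interior_subset subset_rfl)).continuousOn_fderiv_of_isOpen
    hopen le_rfl
  refine ((ContinuousLinearMap.apply ℝ ℝ ((1 : ℝ), (0 : ℝ))).continuous.comp_continuousOn
    hfderiv).congr fun p hp => ?_
  exact (hf.hasDerivAt_flip_apply hp.1 p.2).deriv

theorem continuous_deriv_flip_apply (hf : ContDiffOn ℝ 1 (Function.uncurry f) (s ×ˢ univ))
    (ht : t ∈ interior s) : Continuous fun y => deriv (fun τ => f τ y) t :=
  continuousOn_univ.1 <| hf.continuousOn_deriv_flip_apply.comp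
    (continuous_const.prodMk continuous_id).continuousOn fun y _ => ⟨ht, mem_univ y⟩

theorem hasDerivAt_intervalIntegral_flip_apply
    (hf : ContDiffOn ℝ 1 (Function.uncurry f) (s ×ˢ univ)) (ht : t ∈ interior s) (a b : ℝ) :
    HasDerivAt (fun τ => ∫ y in a..b, f τ y) (∫ y in a..b, deriv (fun τ => f τ y) t) t := by
  obtain ⟨ε, hε, hball⟩ : ∃ ε > 0, Metric.closedBall t ε ⊆ interior s :=
    Metric.nhds_basis_closedBall.mem_iff.1 (isOpen_interior.mem_nhds ht)
  obtain ⟨C, hC⟩ := ((isCompact_closedBall t ε).prod isCompact_uIcc).exists_bound_of_continuousOn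
    (hf.continuousOn_deriv_flip_apply.mono (prod_mono hball (subset_univ (uIcc a b))))
  have hcont : ∀ τ ∈ s, Continuous (f τ) := fun τ hτ => (hf.differentiable_apply hτ).continuous
  refine (intervalIntegral.hasDerivAt_integral_of_dominated_loc_of_deriv_le
    (bound := fun _ => C) (Metric.ball_mem_nhds t hε) ?_
    ((hcont t (interior_subset ht)).intervalIntegrable a b)
    (hf.continuous_deriv_flip_apply ht).aestronglyMeasurable
    (ae_of_all _ fun y hy τ hτ =>
      hC (τ, y) ⟨Metric.ball_subset_closedBall hτ, uIoc_subset_uIcc hy⟩)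
    intervalIntegrable_const
    (ae_of_all _ fun y _ τ hτ => (hf.differentiableAt_flip_apply
      (hball (Metric.ball_subset_closedBall hτ)) y).hasDerivAt)).2
  filter_upwards [isOpen_interior.mem_nhds ht] with τ hτ
  exact (hcont τ (interior_subset hτ)).aestronglyMeasurable

/-- `u` need not be `C²`, so instead of symmetry of second derivatives we differentiate
`u(τ,z) - u(τ,0) = ∫₀ᶻ ∂ₓu(τ,y) dy` under the integral sign. -/
theorem hasDerivAt_deriv_flip_apply {u : ℝ → ℝ → ℝ}
    (hu : ContDiffOn ℝ 1 (Function.uncurry u) (s ×ˢ univ))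
    (hd : ContDiffOn ℝ 1 (Function.uncurry fun t x => deriv (u t) x) (s ×ˢ univ))
    (ht : t ∈ interior s) (x : ℝ) :
    HasDerivAt (fun y => deriv (fun τ => u τ y) t) (deriv (fun τ => deriv (u τ) x) t) x := by
  have hrepr : ∀ z, deriv (fun τ => u τ z) t =
      deriv (fun τ => u τ 0) t + ∫ y in (0 : ℝ)..z, deriv (fun τ => deriv (u τ) y) t := by
    intro z
    have hdiff := (hu.differentiableAt_flip_apply ht z).hasDerivAt.sub
      (hu.differentiableAt_flip_apply ht 0).hasDerivAt
    have hint : HasDerivAt (fun τ => u τ z - u τ 0)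
        (∫ y in (0 : ℝ)..z, deriv (fun τ => deriv (u τ) y) t) t := by
      refine (hd.hasDerivAt_intervalIntegral_flip_apply ht 0 z).congr_of_eventuallyEq ?_
      filter_upwards [isOpen_interior.mem_nhds ht] with τ hτ
      have hτs := interior_subset hτ
      exact intervalIntegral.integral_deriv_eq_sub
        (fun y _ => hu.differentiable_apply hτs y)
        ((hd.differentiable_apply hτs).continuous.intervalIntegrable 0 z) |>.symm
    linarith [hdiff.unique hint]
  rw [funext hrepr]
  exact ((hd.continuous_deriv_flip_apply ht).integral_hasStrictDerivAt 0 x).hasDerivAt.const_add _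

end ContDiffOn

section Flux

variable {γ : ℝ} {u : ℝ → ℝ → ℝ} {t : ℝ}

noncomputable def flux (γ : ℝ) (u : ℝ → ℝ → ℝ) (t x : ℝ) : ℝ :=
  u t x * (1 - u t x) * Real.exp (-(ubar γ u t x))

theorem hasDerivAt_ubar (hu : Continuous (u t)) (x : ℝ) :
    HasDerivAt (ubar γ u t) ((u t (x + γ) - u t x) / γ) x := by
  have hsplit : ubar γ u t =
      fun y => 1 / γ * ((∫ z in (0 : ℝ)..y + γ, u t z) - ∫ z in (0 : ℝ)..y, u t z) := by
    funext y
    rw [intervalIntegral.integral_interval_sub_left (hu.intervalIntegrable _ _)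
      (hu.intervalIntegrable _ _)]
    rfl
  rw [hsplit]
  exact ((((hu.integral_hasStrictDerivAt 0 (x + γ)).hasDerivAt.comp_add_const x γ).sub
    (hu.integral_hasStrictDerivAt 0 x).hasDerivAt).const_mul (1 / γ)).congr_deriv (by ring)

theorem hasDerivAt_flux (hu : Differentiable ℝ (u t)) (x : ℝ) :
    HasDerivAt (flux γ u t)
      ((deriv (u t) x * (1 - 2 * u t x) - u t x * (1 - u t x) * ((u t (x + γ) - u t x) / γ)) *
        Real.exp (-(ubar γ u t x))) x :=
  (((hu x).hasDerivAt.fun_mul ((hu x).hasDerivAt.const_sub 1)).fun_mul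
    (hasDerivAt_ubar hu.continuous x).fun_neg.exp).congr_deriv (by ring)

theorem hasDerivAt_deriv_flux_of_deriv_deriv_eq_zero (hu : Differentiable ℝ (u t))
    (hw : Differentiable ℝ (deriv (u t))) {x : ℝ} (hx : deriv (deriv (u t)) x = 0) :
    HasDerivAt (deriv (flux γ u t))
      (-(Real.exp (-(ubar γ u t x)) *
        (2 * deriv (u t) x ^ 2 + 2 * deriv (u t) x * (1 - 2 * u t x) * ((u t (x + γ) - u t x) / γ)
          - u t x * (1 - u t x) * ((u t (x + γ) - u t x) / γ) ^ 2
          + u t x * (1 - u t x) * ((deriv (u t) (x + γ) - deriv (u t) x) / γ)))) x := by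
  have hflux : deriv (flux γ u t) = fun y => (deriv (u t) y * (1 - 2 * u t y) -
      u t y * (1 - u t y) * ((u t (y + γ) - u t y) / γ)) * Real.exp (-(ubar γ u t y)) :=
    funext fun y => (hasDerivAt_flux hu y).deriv
  rw [hflux]
  have hv := (hu x).hasDerivAt
  have hw' := (hw x).hasDerivAt
  have hA : HasDerivAt (fun y => (u t (y + γ) - u t y) / γ)
      ((deriv (u t) (x + γ) - deriv (u t) x) / γ) x :=
    (((hu (x + γ)).hasDerivAt.comp_add_const x γ).sub hv).div_const γ
  have hE := (hasDerivAt_ubar (γ := γ) hu.continuous x).fun_neg.exp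
  refine (((hw'.fun_mul ((hv.const_mul 2).const_sub 1)).fun_sub
    ((hv.fun_mul (hv.const_sub 1)).fun_mul hA)).fun_mul hE).congr_deriv ?_
  rw [hx]
  ring

/-- In terms of `p = A - N ≥ 0` and `q = -A - N ≥ 0` the part without `B` equals
`c(3+c)p²/4 + (1 + c(1-c)/2)pq + (1-c)(4-c)q²/4`. -/
theorem flux_quadratic_nonneg {N A B c : ℝ} (hA : |A| ≤ -N) (hc : c ∈ Icc (0 : ℝ) 1)
    (hB : 0 ≤ B) :
    0 ≤ 2 * N ^ 2 + 2 * N * (1 - 2 * c) * A - c * (1 - c) * A ^ 2 + c * (1 - c) * B := by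
  obtain ⟨hc0, hc1⟩ := hc
  have hc1' : 0 ≤ 1 - c := sub_nonneg.2 hc1
  have hp : 0 ≤ -N + A := by linarith [neg_abs_le A]
  have hq : 0 ≤ -N - A := by linarith [le_abs_self A]
  have hcc := mul_nonneg hc0 hc1'
  nlinarith [mul_nonneg hcc hB, mul_nonneg hc0 (mul_self_nonneg (-N + A)),
    mul_nonneg (mul_nonneg hc0 hc0) (mul_self_nonneg (-N + A)),
    mul_nonneg hc1' (mul_self_nonneg (-N - A)), mul_nonneg hcc (mul_self_nonneg (-N - A)),
    mul_nonneg hp hq, mul_nonneg hcc (mul_nonneg hp hq)]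

theorem abs_div_le_one_div_of_mem_Icc {a b γ : ℝ} (hγ : 0 < γ) (ha : a ∈ Icc (0 : ℝ) 1)
    (hb : b ∈ Icc (0 : ℝ) 1) : |(a - b) / γ| ≤ 1 / γ := by
  rw [abs_div, abs_of_pos hγ]
  exact div_le_div_of_nonneg_right (abs_sub_le_iff.2 ⟨by linarith [ha.2, hb.1],
    by linarith [ha.1, hb.2]⟩) hγ.le

theorem deriv_gradient_nonneg_at_min {s : Set ℝ} (hγ : 0 < γ)
    (hu : ContDiffOn ℝ 1 (Function.uncurry u) (s ×ˢ univ))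
    (hd : ContDiffOn ℝ 1 (Function.uncurry fun t x => deriv (u t) x) (s ×ˢ univ))
    (ht : t ∈ interior s) (hPDE : ∀ x, deriv (fun τ => u τ x) t + deriv (flux γ u t) x = 0)
    (hrange : ∀ x, u t x ∈ Icc (0 : ℝ) 1) {x₀ : ℝ} (hmin : ∀ x, deriv (u t) x₀ ≤ deriv (u t) x)
    (hN : deriv (u t) x₀ ≤ -(1 / γ)) : 0 ≤ deriv (fun τ => deriv (u τ) x₀) t := by
  have hv := hu.differentiable_apply (interior_subset ht)
  have hw : Differentiable ℝ (deriv (u t)) := hd.differentiable_apply (interior_subset ht)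
  have hcrit : deriv (deriv (u t)) x₀ = 0 :=
    IsLocalMin.deriv_eq_zero (Eventually.of_forall hmin)
  have hcomm := hu.hasDerivAt_deriv_flip_apply hd ht x₀
  rw [funext fun y => eq_neg_of_add_eq_zero_left (hPDE y)] at hcomm
  rw [hcomm.unique (hasDerivAt_deriv_flux_of_deriv_deriv_eq_zero hv hw hcrit).neg, neg_neg]
  refine mul_nonneg (Real.exp_pos _).le (flux_quadratic_nonneg ?_ (hrange x₀)
    (div_nonneg (sub_nonneg.2 (hmin _)) hγ.le))
  exact (abs_div_le_one_div_of_mem_Icc hγ (hrange _) (hrange _)).trans (le_neg_of_le_neg hN)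

end Flux

section Barrier

variable {g : ℝ → ℝ} {φ : ℝ → ℝ → ℝ} {φ' : ℝ → ℝ} {a b : ℝ}

/-- Reversing time turns the left barriers into the right-sided slope bounds of
`image_le_of_liminf_slope_right_le_deriv_boundary`. -/
theorem image_le_of_upper_barrier (hab : a ≤ b) (hg : ContinuousOn g (Icc a b))
    (hle : ∀ s ∈ Ioc a b, ∀ τ ∈ Ico a s, g τ ≤ φ s τ) (heq : ∀ s ∈ Ioc a b, φ s s = g s)
    (hφ : ∀ s ∈ Ioc a b, HasDerivWithinAt (φ s) (φ' s) (Iio s) s)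
    (hφ' : ∀ s ∈ Ioc a b, 0 ≤ φ' s) : g a ≤ g b := by
  have hrev := image_le_of_liminf_slope_right_le_deriv_boundary (f := fun x => g (b - x))
    (a := 0) (b := b - a) (B := fun _ => g b) (B' := fun _ => 0) ?_ (by simp) continuousOn_const
    (fun _ _ => hasDerivWithinAt_const _ _ _) ?_ (x := b - a) ⟨by linarith, le_rfl⟩
  · simpa using hrev
  · refine hg.comp (continuous_const.sub continuous_id).continuousOn fun x hx => ?_
    exact ⟨by linarith [hx.2], by linarith [hx.1]⟩
  · intro x hx r hr
    have hs : b - x ∈ Ioc a b := ⟨by linarith [hx.2], by linarith [hx.1]⟩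
    have hψ : HasDerivWithinAt (fun z => φ (b - x) (b - z)) (-φ' (b - x)) (Ioi x) x := by
      have h := (hφ _ hs).scomp x ((hasDerivAt_id x).const_sub b).hasDerivWithinAt
        fun z (hz : x < z) => show b - z < b - x by linarith
      exact h.congr_deriv (by simp)
    have hslope : ∀ᶠ z in 𝓝[>] x, slope (fun z => φ (b - x) (b - z)) x z < r :=
      (hasDerivWithinAt_iff_tendsto_slope' (lt_irrefl x)).1 hψ |>.eventually_lt_const
        (by linarith [hφ' _ hs])
    refine (hslope.and (Ioo_mem_nhdsGT (show x < b - a from hx.2))).frequently.mono ?_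
    rintro z ⟨hz, hzx, hzb⟩
    refine lt_of_le_of_lt ?_ hz
    simp only [slope_def_field, heq _ hs]
    exact div_le_div_of_nonneg_right
      (sub_le_sub_right (hle _ hs _ ⟨by linarith, by linarith⟩) _) (by linarith)

theorem le_of_upper_barrier_of_lt {c : ℝ} (hab : a ≤ b) (hg : ContinuousOn g (Icc a b))
    (hc : c ≤ g a) (hle : ∀ s ∈ Ioc a b, ∀ τ ∈ Ico a s, g τ ≤ φ s τ)
    (heq : ∀ s ∈ Ioc a b, φ s s = g s)
    (hφ : ∀ s ∈ Ioc a b, HasDerivWithinAt (φ s) (φ' s) (Iio s) s)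
    (hφ' : ∀ s ∈ Ioc a b, g s < c → 0 ≤ φ' s) : c ≤ g b := by
  by_contra! hb
  set S := Icc a b ∩ g ⁻¹' Ici c
  have hSclosed : IsClosed S := hg.preimage_isClosed_of_isClosed isClosed_Icc isClosed_Ici
  have hSbdd : BddAbove S := bddAbove_Icc.mono inter_subset_left
  have hm : sSup S ∈ S := hSclosed.csSup_mem ⟨a, ⟨le_rfl, hab⟩, hc⟩ hSbdd
  have hlt : ∀ s ∈ Ioc (sSup S) b, g s < c := fun s hs => not_le.1 fun hcs =>
    hs.1.not_ge (le_csSup hSbdd ⟨⟨hm.1.1.trans hs.1.le, hs.2⟩, hcs⟩)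
  have hsub : Ioc (sSup S) b ⊆ Ioc a b := Ioc_subset_Ioc_left hm.1.1
  have hmono := image_le_of_upper_barrier hm.1.2 (hg.mono (Icc_subset_Icc_left hm.1.1))
    (fun s hs τ hτ => hle s (hsub hs) τ ⟨hm.1.1.trans hτ.1, hτ.2⟩) (fun s hs => heq s (hsub hs))
    (fun s hs => hφ s (hsub hs)) fun s hs => hφ' s (hsub hs) (hlt s hs)
  exact (hm.2.trans hmono).not_gt hb

end Barrier

theorem gradient_infimum_lower_bound_general
    (γ T : ℝ) (hγ : 0 < γ) (u : ℝ → ℝ → ℝ)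
    (hu : ContDiffOn ℝ 1 (Function.uncurry u) (Ico 0 T ×ˢ univ))
    (hd : ContDiffOn ℝ 1 (Function.uncurry fun t x => deriv (u t) x) (Ico 0 T ×ˢ univ))
    (hPDE : ∀ t x : ℝ, t ∈ Ioo 0 T →
      deriv (fun s => u s x) t +
        deriv (fun y => u t y * (1 - u t y) * Real.exp (-(ubar γ u t y))) x = 0)
    (hrange : ∀ t ∈ Ico (0 : ℝ) T, ∀ x : ℝ, u t x ∈ Icc (0 : ℝ) 1)
    (η : ℝ → ℝ)
    (hmin : ∀ t ∈ Ico (0 : ℝ) T, ∀ x : ℝ, deriv (u t) (η t) ≤ deriv (u t) x)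
    (hLip : ∀ T' ∈ Ioo (0 : ℝ) T, ∃ L : NNReal,
      LipschitzOnWith L (fun t => deriv (u t) (η t)) (Icc 0 T')) :
    ∀ t ∈ Ico (0 : ℝ) T,
      min (deriv (u 0) (η 0)) (-(1/γ)) ≤ deriv (u t) (η t) := by
  intro t ht
  obtain ⟨L, hL⟩ := hLip ((t + T) / 2) ⟨by linarith [ht.1, ht.2], by linarith [ht.2]⟩
  have hint : ∀ s ∈ Ioc 0 t, s ∈ interior (Ico 0 T) := fun s hs => by
    rw [interior_Ico]
    exact ⟨hs.1, hs.2.trans_lt ht.2⟩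
  refine le_of_upper_barrier_of_lt (g := fun s => deriv (u s) (η s)) (φ := fun s τ => deriv (u τ) (η s))
    (φ' := fun s => deriv (fun τ => deriv (u τ) (η s)) s) ht.1
    (hL.continuousOn.mono (Icc_subset_Icc_right (by linarith [ht.2]))) (min_le_left _ _)
    (fun s hs τ hτ => hmin τ ⟨hτ.1, by linarith [hτ.2, hs.2, ht.2]⟩ (η s)) (fun _ _ => rfl)
    (fun s hs => (hd.differentiableAt_flip_apply (hint s hs) _).hasDerivAt.hasDerivWithinAt)
    fun s hs hlt => ?_
  have hsT : s ∈ Ioo 0 T := by simpa only [interior_Ico] using hint s hs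
  exact deriv_gradient_nonneg_at_min hγ hu hd (hint s hs) (fun x => hPDE s x hsT)
    (hrange s (Ioo_subset_Ico_self hsT)) (hmin s (Ioo_subset_Ico_self hsT))
    (hlt.le.trans (min_le_right _ _))

/-- for a `C¹` solution `u` of the traffic model with constant potential on
`[0,T)×ℝ`, with `∂ₓu` of class `C¹`, `0 ≤ u ≤ 1`, whose gradient infimum
`N(t) = inf_x ∂ₓu(t,x)` is attained at `η(t)` and is locally Lipschitz in `t`, one has
`N(t) ≥ min{N(0), −1/γ}` for all `t ∈ [0,T)`. -/
theorem gradient_infimum_lower_bound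
    (γ T : ℝ) (hγ : 0 < γ) (hT : 0 < T) (u : ℝ → ℝ → ℝ)
    (hu : ContDiffOn ℝ 1 (Function.uncurry u) (Ico 0 T ×ˢ univ))
    (hd : ContDiffOn ℝ 1 (Function.uncurry fun t x => deriv (u t) x) (Ico 0 T ×ˢ univ))
    (hPDE : ∀ t x : ℝ, t ∈ Ioo 0 T →
      deriv (fun s => u s x) t +
        deriv (fun y => u t y * (1 - u t y) * Real.exp (-(ubar γ u t y))) x = 0)
    (hrange : ∀ t ∈ Ico (0 : ℝ) T, ∀ x : ℝ, u t x ∈ Icc (0 : ℝ) 1)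
    (η : ℝ → ℝ)
    (hmin : ∀ t ∈ Ico (0 : ℝ) T, ∀ x : ℝ, deriv (u t) (η t) ≤ deriv (u t) x)
    (hLip : ∀ T' ∈ Ioo (0 : ℝ) T, ∃ L : NNReal,
      LipschitzOnWith L (fun t => deriv (u t) (η t)) (Icc 0 T')) :
    ∀ t ∈ Ico (0 : ℝ) T,
      min (deriv (u 0) (η 0)) (-(1/γ)) ≤ deriv (u t) (η t) :=
  gradient_infimum_lower_bound_general γ T hγ u hu hd hPDE hrange η hmin hLip
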